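/- There exists a family of invertible formal power series Q_k(i,j) ∈ K[[z,z′]], indexed by k ∈ {1,…,n−1} and pairs (i,j) ∈ S², such that, writing Q_k(i) := Q_k(i_k,i_{k+1})(y_k,y_{k+1}) ∈ K[[y_1,…,y_n]] and X_k(i) := i_k(1 − g(y_k)), the following hold for all i = (i_1,…,i_n) ∈ S^n and 1 ≤ k ≤ n−1: (★1) if i_k = i_{k+1} then Q_k(i)·(g(y_{k+1}) − g(y_k)) = i_k^{−1}(q^{−1}X_k(i) − qX_{k+1}(i))·(y_{k+1} − y_k); (★2) writing D := (X_k(i) − X_{k+1}(i))(X_{k+1}(i) − X_k(i)) and N := (qX_k(i) − q^{−1}X_{k+1}(i))(qX_{k+1}(i) − q^{−1}X_k(i)), one has {}^{r_k}Q_k(r_k(i))·Q_k(i)·D = N if i_k ↮ i_{k+1}; {}^{r_k}Q_k(r_k(i))·Q_k(i)·(y_{k+1}−y_k)·D = N if i_k ← i_{k+1}; {}^{r_k}Q_k(r_k(i))·Q_k(i)·(y_k−y_{k+1})·D = N if i_k → i_{k+1}; and {}^{r_k}Q_k(r_k(i))·Q_k(i)·(y_{k+1}−y_k)(y_k−y_{k+1})·D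 = N if i_k ↔ i_{k+1}; (★3) {}^{r_k}Q_{k+1}(r_{k+1}r_k(i)) = {}^{r_{k+1}}Q_k(r_kr_{k+1}(i)) for 1 ≤ k ≤ n−2. -/

import Mathlib

/-!
Formalization of definitions from:
L. Poulain d'Andecy and R. Walker, "Affine Hecke algebras and generalisations
of quiver Hecke algebras for type B".

Presented algebras are realized as `RingQuot` quotients of free algebras.
-/

open scoped BigOperators Classical

noncomputable section

namespace PdAW

variable {K : Type} [Field K]

/-! ### The eigenvalue sets `I_λ` and `S` -/

/-- `I_λ = {λ^ε q^{2t} : ε ∈ {±1}, t ∈ ℤ}`. -/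
def Iset (q lam : K) : Set K :=
  {x | ∃ ε : ℤ, (ε = 1 ∨ ε = -1) ∧ ∃ t : ℤ, x = lam ^ ε * q ^ (2 * t)}

/-- `S = I_{λ_1} ∪ ⋯ ∪ I_{λ_l}`. -/
def Sset {l : ℕ} (q : K) (lam : Fin l → K) : Set K := ⋃ a, Iset q (lam a)

/-! ### The Weyl group action on tuples -/

variable {n : ℕ}

/-- The simple transposition exchanging the (0-based) entries `c` and `c+1`. -/
def swapMove (c : ℕ) (h : c + 1 < n) (i : Fin n → K) : Fin n → K :=
  i ∘ Equiv.swap ⟨c, Nat.lt_of_succ_lt h⟩ ⟨c + 1, h⟩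

/-- The reflection `r_0`, inverting the first entry. -/
def invMove (h : 0 < n) (i : Fin n → K) : Fin n → K :=
  Function.update i ⟨0, h⟩ (i ⟨0, h⟩)⁻¹

/-- One step of the symmetric-group action. -/
def AStep (i j : Fin n → K) : Prop := ∃ c, ∃ h : c + 1 < n, j = swapMove c h i

/-- One step of the type-B Weyl group action. -/
def BStep (i j : Fin n → K) : Prop := AStep i j ∨ ∃ h : 0 < n, j = invMove h i

/-- `j` lies in the `W(B_n)`-orbit of `i`. -/
def inOrbitB (i j : Fin n → K) : Prop := Relation.ReflTransGen BStep i j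

/-- `β` is an orbit for the action of `W(B_n)`. -/
def IsBOrbit (β : Set (Fin n → K)) : Prop := ∃ i₀ ∈ β, β = {j | inOrbitB i₀ j}

/-- `α` is a union of orbits for the symmetric group action (i.e. is closed under it). -/
def IsAClosed (α : Set (Fin n → K)) : Prop :=
  ∀ i ∈ α, ∀ c, ∀ h : c + 1 < n, swapMove c h i ∈ α

theorem fin_lt (c : Fin (n - 1)) : c.1 + 1 < n := by have := c.2; omega

/-- The 0-based position of the paper's index `b ∈ {1,…,n-1}` (namely `b-1`). -/
def lo (c : Fin (n - 1)) : Fin n := ⟨c.1, Nat.lt_of_succ_lt (fin_lt c)⟩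

/-- The 0-based position `b` for the paper's index `b ∈ {1,…,n-1}`. -/
def hi (c : Fin (n - 1)) : Fin n := ⟨c.1 + 1, fin_lt c⟩

/-- The action of the simple reflection `r_{c+1}` on tuples. -/
def sw (c : Fin (n - 1)) (i : Fin n → K) : Fin n → K := swapMove c.1 (fin_lt c) i

/-! ### Quiver arrows (for the quiver with arrows `i → q²i`) -/

/-- `i → j` : `j = q²i ≠ q⁻²i`. -/
def qarr (q i j : K) : Prop := j = q ^ 2 * i ∧ j ≠ (q ^ 2)⁻¹ * i

/-- `i ← j` : `j = q⁻²i ≠ q²i`. -/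
def qbak (q i j : K) : Prop := j = (q ^ 2)⁻¹ * i ∧ j ≠ q ^ 2 * i

/-- `i ↔ j` : `j = q²i = q⁻²i`. -/
def qdbl (q i j : K) : Prop := j = q ^ 2 * i ∧ j = (q ^ 2)⁻¹ * i

/-- `i ↮ j` : `i ≠ j` and `j ∉ {q²i, q⁻²i}`. -/
def qnon (q i j : K) : Prop := i ≠ j ∧ j ≠ q ^ 2 * i ∧ j ≠ (q ^ 2)⁻¹ * i

/-- `i⁻¹ →ᵖ i` : `i ∈ {±p}` and `i ∉ {±p⁻¹}`. -/
def parr (p i : K) : Prop := (i = p ∨ i = -p) ∧ ¬(i = p⁻¹ ∨ i = -p⁻¹)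

/-- `i⁻¹ ←ᵖ i` : `i ∉ {±p}` and `i ∈ {±p⁻¹}`. -/
def pbak (p i : K) : Prop := ¬(i = p ∨ i = -p) ∧ (i = p⁻¹ ∨ i = -p⁻¹)

/-- `i⁻¹ ↔ᵖ i` : `i ∈ {±p} ∩ {±p⁻¹}`. -/
def pdbl (p i : K) : Prop := (i = p ∨ i = -p) ∧ (i = p⁻¹ ∨ i = -p⁻¹)

/-- `i⁻¹ ↮ᵖ i` : `i ≠ i⁻¹` and `i ∉ {±p, ±p⁻¹}`. -/
def pnon (p i : K) : Prop := i ≠ i⁻¹ ∧ ¬(i = p ∨ i = -p ∨ i = p⁻¹ ∨ i = -p⁻¹)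

/-- The product `∏_{λ ∈ I} (x - λ)^{m(λ)}` (the factors pairwise commute). -/
def polyProd {A : Type} [Ring A] [Algebra K A] (x : A) (I : Finset K) (m : K → ℕ) : A :=
  I.noncommProd (fun lam => (x - algebraMap K A lam) ^ m lam) (by
    intro a _ b _ _
    have h1 : Commute x (algebraMap K A b) := (Algebra.commutes b x).symm
    have h2 : Commute (algebraMap K A a) x := Algebra.commutes a x
    have h3 : Commute (algebraMap K A a) (algebraMap K A b) := Algebra.commutes a _
    exact (((Commute.refl x).sub_right h1).sub_left (h2.sub_right h3)).pow_pow _ _)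

/-! ### The affine Hecke algebra of type A and its cyclotomic quotients -/

/-- Generators of the affine Hecke algebra `Ĥ(A_n)`:
`g c` is the paper's `g_{c+1}` (`c+1 ∈ {1,…,n-1}`), `X k` is `X_{k+1}`, `Xinv k` is `X_{k+1}⁻¹`. -/
inductive AGen (n : ℕ) : Type
  | g : Fin (n - 1) → AGen n
  | X : Fin n → AGen n
  | Xinv : Fin n → AGen n

def ag (c : Fin (n - 1)) : FreeAlgebra K (AGen n) := FreeAlgebra.ι K (AGen.g c)
def aX (k : Fin n) : FreeAlgebra K (AGen n) := FreeAlgebra.ι K (AGen.X k)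
def aXi (k : Fin n) : FreeAlgebra K (AGen n) := FreeAlgebra.ι K (AGen.Xinv k)

/-- Defining relations of the affine Hecke algebra `Ĥ(A_n)`. -/
inductive HARel (q : K) (n : ℕ) : FreeAlgebra K (AGen n) → FreeAlgebra K (AGen n) → Prop
  | quad (c : Fin (n - 1)) : HARel q n (ag c * ag c) ((q - q⁻¹) • ag c + 1)
  | braid (c c' : Fin (n - 1)) (h : c'.1 = c.1 + 1) :
      HARel q n (ag c * ag c' * ag c) (ag c' * ag c * ag c')
  | gcomm (c c' : Fin (n - 1)) (h : c.1 + 1 < c'.1) :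
      HARel q n (ag c * ag c') (ag c' * ag c)
  | Xcomm (k l : Fin n) : HARel q n (aX k * aX l) (aX l * aX k)
  | Xunit (k : Fin n) : HARel q n (aX k * aXi k) 1
  | Xunit' (k : Fin n) : HARel q n (aXi k * aX k) 1
  | gXg (c : Fin (n - 1)) : HARel q n (ag c * aX (lo c) * ag c) (aX (hi c))
  | gX (c : Fin (n - 1)) (k : Fin n) (h : k ≠ lo c ∧ k ≠ hi c) :
      HARel q n (ag c * aX k) (aX k * ag c)

/-- The affine Hecke algebra `Ĥ(A_n)`. -/
abbrev HeckeA (q : K) (n : ℕ) : Type := RingQuot (HARel q n)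

/-- Defining relations of the cyclotomic quotient `H(A_n)_{λ,m}`. -/
inductive HAcRel (q : K) (n : ℕ) (m : K →₀ ℕ) :
    FreeAlgebra K (AGen n) → FreeAlgebra K (AGen n) → Prop
  | ofA {a b : FreeAlgebra K (AGen n)} (h : HARel q n a b) : HAcRel q n m a b
  | cyc (h0 : 0 < n) : HAcRel q n m (polyProd (aX ⟨0, h0⟩) m.support ⇑m) 0

/-- The cyclotomic quotient `H(A_n)_{λ,m}`. -/
abbrev HeckeAc (q : K) (n : ℕ) (m : K →₀ ℕ) : Type := RingQuot (HAcRel q n m)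

/-! ### The affine Hecke algebra of type B and its cyclotomic quotients -/

inductive BGen (n : ℕ) : Type
  | g0 : BGen n
  | g : Fin (n - 1) → BGen n
  | X : Fin n → BGen n
  | Xinv : Fin n → BGen n

def bg0 : FreeAlgebra K (BGen n) := FreeAlgebra.ι K BGen.g0
def bg (c : Fin (n - 1)) : FreeAlgebra K (BGen n) := FreeAlgebra.ι K (BGen.g c)
def bX (k : Fin n) : FreeAlgebra K (BGen n) := FreeAlgebra.ι K (BGen.X k)
def bXi (k : Fin n) : FreeAlgebra K (BGen n) := FreeAlgebra.ι K (BGen.Xinv k)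

/-- Defining relations of the affine Hecke algebra `Ĥ(B_n)`. -/
inductive HBRel (p q : K) (n : ℕ) : FreeAlgebra K (BGen n) → FreeAlgebra K (BGen n) → Prop
  | quad0 : HBRel p q n (bg0 * bg0) ((p - p⁻¹) • bg0 + 1)
  | quad (c : Fin (n - 1)) : HBRel p q n (bg c * bg c) ((q - q⁻¹) • bg c + 1)
  | braid0 (h : 0 < n - 1) :
      HBRel p q n (bg0 * bg ⟨0, h⟩ * bg0 * bg ⟨0, h⟩) (bg ⟨0, h⟩ * bg0 * bg ⟨0, h⟩ * bg0)
  | braid (c c' : Fin (n - 1)) (h : c'.1 = c.1 + 1) :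
      HBRel p q n (bg c * bg c' * bg c) (bg c' * bg c * bg c')
  | gcomm (c c' : Fin (n - 1)) (h : c.1 + 1 < c'.1) :
      HBRel p q n (bg c * bg c') (bg c' * bg c)
  | g0comm (c : Fin (n - 1)) (h : 1 ≤ c.1) : HBRel p q n (bg0 * bg c) (bg c * bg0)
  | Xcomm (k l : Fin n) : HBRel p q n (bX k * bX l) (bX l * bX k)
  | Xunit (k : Fin n) : HBRel p q n (bX k * bXi k) 1
  | Xunit' (k : Fin n) : HBRel p q n (bXi k * bX k) 1
  | g0Xg0 (h0 : 0 < n) : HBRel p q n (bg0 * bXi ⟨0, h0⟩ * bg0) (bX ⟨0, h0⟩)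
  | gXg (c : Fin (n - 1)) : HBRel p q n (bg c * bX (lo c) * bg c) (bX (hi c))
  | gX (c : Fin (n - 1)) (k : Fin n) (h : k ≠ lo c ∧ k ≠ hi c) :
      HBRel p q n (bg c * bX k) (bX k * bg c)
  | g0X (k : Fin n) (h : k.1 ≠ 0) : HBRel p q n (bg0 * bX k) (bX k * bg0)

/-- The affine Hecke algebra `Ĥ(B_n)`. -/
abbrev HeckeB (p q : K) (n : ℕ) : Type := RingQuot (HBRel p q n)

/-- Defining relations of the cyclotomic quotient `H(B_n)_{λ,m}`. -/
inductive HBcRel (p q : K) (n : ℕ) (m : K →₀ ℕ) :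
    FreeAlgebra K (BGen n) → FreeAlgebra K (BGen n) → Prop
  | ofB {a b : FreeAlgebra K (BGen n)} (h : HBRel p q n a b) : HBcRel p q n m a b
  | cyc (h0 : 0 < n) : HBcRel p q n m (polyProd (bX ⟨0, h0⟩) m.support ⇑m) 0

/-- The cyclotomic quotient `H(B_n)_{λ,m}`. -/
abbrev HeckeBc (p q : K) (n : ℕ) (m : K →₀ ℕ) : Type := RingQuot (HBcRel p q n m)

/-! ### Spectral idempotent families and corner (block) algebras -/

/-- The characterizing properties of the family of idempotents `e^H(i)` projecting onto
the common generalized eigenspaces of commuting elements `Xs k` (acting by left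
multiplication): they are orthogonal idempotents summing to `1`, commuting with the
`Xs k`, with `(Xs k - i_k)` nilpotent on `E i`.  Such a family is unique. -/
def IsSpectralFamily {A : Type} [Ring A] [Algebra K A] (Xs : Fin n → A)
    (T : Finset (Fin n → K)) (E : (Fin n → K) → A) : Prop :=
  (∀ i, i ∉ T → E i = 0) ∧ (∑ i ∈ T, E i = 1) ∧
  (∀ i, E i * E i = E i) ∧ (∀ i j, i ≠ j → E i * E j = 0) ∧
  (∀ i k, Xs k * E i = E i * Xs k) ∧
  (∀ i ∈ T, ∀ k : Fin n, ∃ N : ℕ, 0 < N ∧ (Xs k - algebraMap K A (i k)) ^ N * E i = 0)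

/-- Relation identifying a central idempotent `e` with `1`. -/
def cornerRel {A : Type} [Ring A] (e : A) : A → A → Prop := fun x y => x = e ∧ y = 1

/-- For a central idempotent `e` of `A`, the corner algebra `eA` realized as the
quotient of `A` by the relation `e = 1`. -/
abbrev Corner (A : Type) [Ring A] (e : A) : Type := RingQuot (cornerRel e)

/-- Canonical algebra map `A → eA`. -/
def cornerMk {A : Type} [Ring A] [Algebra K A] (e : A) : A →ₐ[K] Corner A e :=
  RingQuot.mkAlgHom K (cornerRel e)

/-! ### Cyclotomic KLR algebras (type A quiver Hecke algebras) -/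

/-- Generators of the KLR algebra: `psi c` is the paper's `ψ_{c+1}`, `y k` is `y_{k+1}`,
`e i` for `i` in the index set `α`. -/
inductive RGen (K : Type) (n : ℕ) (α : Finset (Fin n → K)) : Type
  | psi : Fin (n - 1) → RGen K n α
  | y : Fin n → RGen K n α
  | e : {x // x ∈ α} → RGen K n α

def rψ {α : Finset (Fin n → K)} (c : Fin (n - 1)) : FreeAlgebra K (RGen K n α) :=
  FreeAlgebra.ι K (RGen.psi c)
def ry {α : Finset (Fin n → K)} (k : Fin n) : FreeAlgebra K (RGen K n α) :=
  FreeAlgebra.ι K (RGen.y k)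
def re {α : Finset (Fin n → K)} (i : {x // x ∈ α}) : FreeAlgebra K (RGen K n α) :=
  FreeAlgebra.ι K (RGen.e i)

/-- Defining relations of the cyclotomic KLR algebra `R^α_{λ,m}`. -/
inductive RRel (q : K) (n : ℕ) (α : Finset (Fin n → K)) (m : K →₀ ℕ) :
    FreeAlgebra K (RGen K n α) → FreeAlgebra K (RGen K n α) → Prop
  | esum : RRel q n α m (∑ i ∈ α.attach, re i) 1
  | eidem (i) : RRel q n α m (re i * re i) (re i)
  | eorth (i j) (h : i ≠ j) : RRel q n α m (re i * re j) 0
  | ycomm (k l : Fin n) : RRel q n α m (ry k * ry l) (ry l * ry k)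
  | ye (k : Fin n) (i) : RRel q n α m (ry k * re i) (re i * ry k)
  | psiE (c : Fin (n - 1)) (i : {x // x ∈ α}) (h' : sw c i.1 ∈ α) :
      RRel q n α m (rψ c * re i) (re ⟨sw c i.1, h'⟩ * rψ c)
  | psiyB (c : Fin (n - 1)) (i) (h : i.1 (lo c) = i.1 (hi c)) :
      RRel q n α m ((rψ c * ry (lo c) - ry (hi c) * rψ c) * re i) (-re i)
  | psiyB1 (c : Fin (n - 1)) (i) (h : i.1 (lo c) = i.1 (hi c)) :
      RRel q n α m ((rψ c * ry (hi c) - ry (lo c) * rψ c) * re i) (re i)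
  | psiyO (c : Fin (n - 1)) (i) (j : Fin n)
      (h : i.1 (lo c) ≠ i.1 (hi c) ∨ (j ≠ lo c ∧ j ≠ hi c)) :
      RRel q n α m ((rψ c * ry j - ry (Equiv.swap (lo c) (hi c) j) * rψ c) * re i) 0
  | psicomm (c c' : Fin (n - 1)) (h : c.1 + 1 < c'.1) :
      RRel q n α m (rψ c * rψ c') (rψ c' * rψ c)
  | sqEq (c : Fin (n - 1)) (i) (h : i.1 (lo c) = i.1 (hi c)) :
      RRel q n α m (rψ c * rψ c * re i) 0
  | sqNon (c : Fin (n - 1)) (i) (h : qnon q (i.1 (lo c)) (i.1 (hi c))) :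
      RRel q n α m (rψ c * rψ c * re i) (re i)
  | sqArr (c : Fin (n - 1)) (i) (h : qarr q (i.1 (lo c)) (i.1 (hi c))) :
      RRel q n α m (rψ c * rψ c * re i) ((ry (hi c) - ry (lo c)) * re i)
  | sqBak (c : Fin (n - 1)) (i) (h : qbak q (i.1 (lo c)) (i.1 (hi c))) :
      RRel q n α m (rψ c * rψ c * re i) ((ry (lo c) - ry (hi c)) * re i)
  | sqDbl (c : Fin (n - 1)) (i) (h : qdbl q (i.1 (lo c)) (i.1 (hi c))) :
      RRel q n α m (rψ c * rψ c * re i) ((ry (hi c) - ry (lo c)) * ((ry (lo c) - ry (hi c)) * re i))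
  | brArr (c c' : Fin (n - 1)) (hcc : c'.1 = c.1 + 1) (i) (h1 : i.1 (lo c) = i.1 (hi c'))
      (h2 : qarr q (i.1 (lo c)) (i.1 (hi c))) :
      RRel q n α m ((rψ c * rψ c' * rψ c - rψ c' * rψ c * rψ c') * re i) (re i)
  | brBak (c c' : Fin (n - 1)) (hcc : c'.1 = c.1 + 1) (i) (h1 : i.1 (lo c) = i.1 (hi c'))
      (h2 : qbak q (i.1 (lo c)) (i.1 (hi c))) :
      RRel q n α m ((rψ c * rψ c' * rψ c - rψ c' * rψ c * rψ c') * re i) (-re i)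
  | brDbl (c c' : Fin (n - 1)) (hcc : c'.1 = c.1 + 1) (i) (h1 : i.1 (lo c) = i.1 (hi c'))
      (h2 : qdbl q (i.1 (lo c)) (i.1 (hi c))) :
      RRel q n α m ((rψ c * rψ c' * rψ c - rψ c' * rψ c * rψ c') * re i)
        ((ry (hi c') + ry (lo c) - ry (hi c) - ry (hi c)) * re i)
  | brEls (c c' : Fin (n - 1)) (hcc : c'.1 = c.1 + 1) (i)
      (h : ¬(i.1 (lo c) = i.1 (hi c') ∧ (qarr q (i.1 (lo c)) (i.1 (hi c)) ∨
            qbak q (i.1 (lo c)) (i.1 (hi c)) ∨ qdbl q (i.1 (lo c)) (i.1 (hi c))))) :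
      RRel q n α m ((rψ c * rψ c' * rψ c - rψ c' * rψ c * rψ c') * re i) 0
  | cyc (i) (h0 : 0 < n) :
      RRel q n α m (ry ⟨0, h0⟩ ^ m (i.1 ⟨0, h0⟩) * re i) 0

/-- The cyclotomic KLR algebra `R^α_{λ,m}`. -/
abbrev KLR (q : K) (n : ℕ) (α : Finset (Fin n → K)) (m : K →₀ ℕ) : Type :=
  RingQuot (RRel q n α m)

/-! ### The generalized Varagnolo–Vasserot algebras `V^β_λ` and cyclotomic quotients -/

inductive VGen (K : Type) (n : ℕ) (β : Finset (Fin n → K)) : Type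
  | psi0 : VGen K n β
  | psi : Fin (n - 1) → VGen K n β
  | y : Fin n → VGen K n β
  | e : {x // x ∈ β} → VGen K n β

def vψ0 {β : Finset (Fin n → K)} : FreeAlgebra K (VGen K n β) := FreeAlgebra.ι K VGen.psi0
def vψ {β : Finset (Fin n → K)} (c : Fin (n - 1)) : FreeAlgebra K (VGen K n β) :=
  FreeAlgebra.ι K (VGen.psi c)
def vy {β : Finset (Fin n → K)} (k : Fin n) : FreeAlgebra K (VGen K n β) :=
  FreeAlgebra.ι K (VGen.y k)
def ve {β : Finset (Fin n → K)} (i : {x // x ∈ β}) : FreeAlgebra K (VGen K n β) :=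
  FreeAlgebra.ι K (VGen.e i)

/-- Case conditions appearing in the four-term relation (Rel:V11). -/
def c4a (q i1 i2 : K) : Prop := i1⁻¹ ≠ i1 ∧ qarr q i1 i2 ∧ i2⁻¹ = i2
def c4b (q i1 i2 : K) : Prop := i1⁻¹ ≠ i1 ∧ qbak q i1 i2 ∧ i2⁻¹ = i2
def c4c (q i1 i2 : K) : Prop := i1⁻¹ = i1 ∧ qdbl q i1 i2 ∧ i2⁻¹ = i2
def c4d (p i1 i2 : K) : Prop := i2 ≠ i1 ∧ pbak p i1⁻¹ ∧ i1⁻¹ = i2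
def c4e (p i1 i2 : K) : Prop := i2 ≠ i1 ∧ parr p i1⁻¹ ∧ i1⁻¹ = i2
def c4f (p i1 i2 : K) : Prop := i2 ≠ i1 ∧ pdbl p i1⁻¹ ∧ i1⁻¹ = i2

/-- `((ψ_0ψ_1)² - (ψ_1ψ_0)²) e(i)`. -/
def vfour {β : Finset (Fin n → K)} (h2 : 1 < n) (i : {x // x ∈ β}) :
    FreeAlgebra K (VGen K n β) :=
  (vψ0 * vψ ⟨0, by omega⟩ * vψ0 * vψ ⟨0, by omega⟩ -
    vψ ⟨0, by omega⟩ * vψ0 * vψ ⟨0, by omega⟩ * vψ0) * ve i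

/-- Defining relations of the cyclotomic quotient `V^β_{λ,m}` of the generalized
Varagnolo–Vasserot algebra (Definition 2.1 of the paper, plus the cyclotomic relation). -/
inductive VRel (p q : K) (n : ℕ) (β : Finset (Fin n → K)) (m : K →₀ ℕ) :
    FreeAlgebra K (VGen K n β) → FreeAlgebra K (VGen K n β) → Prop
  | esum : VRel p q n β m (∑ i ∈ β.attach, ve i) 1
  | eidem (i) : VRel p q n β m (ve i * ve i) (ve i)
  | eorth (i j) (h : i ≠ j) : VRel p q n β m (ve i * ve j) 0
  | ycomm (k l : Fin n) : VRel p q n β m (vy k * vy l) (vy l * vy k)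
  | ye (k : Fin n) (i) : VRel p q n β m (vy k * ve i) (ve i * vy k)
  | psiE (c : Fin (n - 1)) (i : {x // x ∈ β}) (h' : sw c i.1 ∈ β) :
      VRel p q n β m (vψ c * ve i) (ve ⟨sw c i.1, h'⟩ * vψ c)
  | psi0E (i : {x // x ∈ β}) (h0 : 0 < n) (h' : invMove h0 i.1 ∈ β) :
      VRel p q n β m (vψ0 * ve i) (ve ⟨invMove h0 i.1, h'⟩ * vψ0)
  | psiyB (c : Fin (n - 1)) (i) (h : i.1 (lo c) = i.1 (hi c)) :
      VRel p q n β m ((vψ c * vy (lo c) - vy (hi c) * vψ c) * ve i) (-ve i)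
  | psiyB1 (c : Fin (n - 1)) (i) (h : i.1 (lo c) = i.1 (hi c)) :
      VRel p q n β m ((vψ c * vy (hi c) - vy (lo c) * vψ c) * ve i) (ve i)
  | psiyO (c : Fin (n - 1)) (i) (j : Fin n)
      (h : i.1 (lo c) ≠ i.1 (hi c) ∨ (j ≠ lo c ∧ j ≠ hi c)) :
      VRel p q n β m ((vψ c * vy j - vy (Equiv.swap (lo c) (hi c) j) * vψ c) * ve i) 0
  | psicomm (c c' : Fin (n - 1)) (h : c.1 + 1 < c'.1) :
      VRel p q n β m (vψ c * vψ c') (vψ c' * vψ c)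
  | psicomm0 (c : Fin (n - 1)) (h : 1 ≤ c.1) : VRel p q n β m (vψ0 * vψ c) (vψ c * vψ0)
  | sqEq (c : Fin (n - 1)) (i) (h : i.1 (lo c) = i.1 (hi c)) :
      VRel p q n β m (vψ c * vψ c * ve i) 0
  | sqNon (c : Fin (n - 1)) (i) (h : qnon q (i.1 (lo c)) (i.1 (hi c))) :
      VRel p q n β m (vψ c * vψ c * ve i) (ve i)
  | sqArr (c : Fin (n - 1)) (i) (h : qarr q (i.1 (lo c)) (i.1 (hi c))) :
      VRel p q n β m (vψ c * vψ c * ve i) ((vy (hi c) - vy (lo c)) * ve i)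
  | sqBak (c : Fin (n - 1)) (i) (h : qbak q (i.1 (lo c)) (i.1 (hi c))) :
      VRel p q n β m (vψ c * vψ c * ve i) ((vy (lo c) - vy (hi c)) * ve i)
  | sqDbl (c : Fin (n - 1)) (i) (h : qdbl q (i.1 (lo c)) (i.1 (hi c))) :
      VRel p q n β m (vψ c * vψ c * ve i) ((vy (hi c) - vy (lo c)) * ((vy (lo c) - vy (hi c)) * ve i))
  | brArr (c c' : Fin (n - 1)) (hcc : c'.1 = c.1 + 1) (i) (h1 : i.1 (lo c) = i.1 (hi c'))
      (h2 : qarr q (i.1 (lo c)) (i.1 (hi c))) :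
      VRel p q n β m ((vψ c * vψ c' * vψ c - vψ c' * vψ c * vψ c') * ve i) (ve i)
  | brBak (c c' : Fin (n - 1)) (hcc : c'.1 = c.1 + 1) (i) (h1 : i.1 (lo c) = i.1 (hi c'))
      (h2 : qbak q (i.1 (lo c)) (i.1 (hi c))) :
      VRel p q n β m ((vψ c * vψ c' * vψ c - vψ c' * vψ c * vψ c') * ve i) (-ve i)
  | brDbl (c c' : Fin (n - 1)) (hcc : c'.1 = c.1 + 1) (i) (h1 : i.1 (lo c) = i.1 (hi c'))
      (h2 : qdbl q (i.1 (lo c)) (i.1 (hi c))) :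
      VRel p q n β m ((vψ c * vψ c' * vψ c - vψ c' * vψ c * vψ c') * ve i)
        ((vy (hi c') + vy (lo c) - vy (hi c) - vy (hi c)) * ve i)
  | brEls (c c' : Fin (n - 1)) (hcc : c'.1 = c.1 + 1) (i)
      (h : ¬(i.1 (lo c) = i.1 (hi c') ∧ (qarr q (i.1 (lo c)) (i.1 (hi c)) ∨
            qbak q (i.1 (lo c)) (i.1 (hi c)) ∨ qdbl q (i.1 (lo c)) (i.1 (hi c))))) :
      VRel p q n β m ((vψ c * vψ c' * vψ c - vψ c' * vψ c * vψ c') * ve i) 0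
  | psi0yNe (i) (h0 : 0 < n) (h : (i.1 ⟨0, h0⟩)⁻¹ ≠ i.1 ⟨0, h0⟩) :
      VRel p q n β m ((vψ0 * vy ⟨0, h0⟩ + vy ⟨0, h0⟩ * vψ0) * ve i) 0
  | psi0yEq (i) (h0 : 0 < n) (h : (i.1 ⟨0, h0⟩)⁻¹ = i.1 ⟨0, h0⟩) :
      VRel p q n β m ((vψ0 * vy ⟨0, h0⟩ + vy ⟨0, h0⟩ * vψ0) * ve i) (ve i + ve i)
  | psi0yO (k : Fin n) (h : k.1 ≠ 0) : VRel p q n β m (vψ0 * vy k) (vy k * vψ0)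
  | sq0Eq (i) (h0 : 0 < n) (h : (i.1 ⟨0, h0⟩)⁻¹ = i.1 ⟨0, h0⟩) :
      VRel p q n β m (vψ0 * vψ0 * ve i) 0
  | sq0Non (i) (h0 : 0 < n) (h : pnon p (i.1 ⟨0, h0⟩)) :
      VRel p q n β m (vψ0 * vψ0 * ve i) (ve i)
  | sq0Arr (i) (h0 : 0 < n) (h : parr p (i.1 ⟨0, h0⟩)) :
      VRel p q n β m (vψ0 * vψ0 * ve i) (vy ⟨0, h0⟩ * ve i)
  | sq0Bak (i) (h0 : 0 < n) (h : pbak p (i.1 ⟨0, h0⟩)) :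
      VRel p q n β m (vψ0 * vψ0 * ve i) (-(vy ⟨0, h0⟩ * ve i))
  | sq0Dbl (i) (h0 : 0 < n) (h : pdbl p (i.1 ⟨0, h0⟩)) :
      VRel p q n β m (vψ0 * vψ0 * ve i) (-(vy ⟨0, h0⟩ * (vy ⟨0, h0⟩ * ve i)))
  | fourA (i) (h2 : 1 < n) (h : c4a q (i.1 ⟨0, Nat.lt_of_succ_lt h2⟩) (i.1 ⟨1, h2⟩)) :
      VRel p q n β m (vfour h2 i) ((2 : K) • (vψ0 * ve i))
  | fourB (i) (h2 : 1 < n) (h : c4b q (i.1 ⟨0, Nat.lt_of_succ_lt h2⟩) (i.1 ⟨1, h2⟩)) :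
      VRel p q n β m (vfour h2 i) (-((2 : K) • (vψ0 * ve i)))
  | fourC (i) (h2 : 1 < n) (h : c4c q (i.1 ⟨0, Nat.lt_of_succ_lt h2⟩) (i.1 ⟨1, h2⟩)) :
      VRel p q n β m (vfour h2 i) ((4 : K) • ((vψ0 * vy ⟨0, Nat.lt_of_succ_lt h2⟩ - 1) * ve i))
  | fourD (i) (h2 : 1 < n) (h : c4d p (i.1 ⟨0, Nat.lt_of_succ_lt h2⟩) (i.1 ⟨1, h2⟩)) :
      VRel p q n β m (vfour h2 i) (-(vψ ⟨0, by omega⟩ * ve i))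
  | fourE (i) (h2 : 1 < n) (h : c4e p (i.1 ⟨0, Nat.lt_of_succ_lt h2⟩) (i.1 ⟨1, h2⟩)) :
      VRel p q n β m (vfour h2 i) (vψ ⟨0, by omega⟩ * ve i)
  | fourF (i) (h2 : 1 < n) (h : c4f p (i.1 ⟨0, Nat.lt_of_succ_lt h2⟩) (i.1 ⟨1, h2⟩)) :
      VRel p q n β m (vfour h2 i)
        (vψ ⟨0, by omega⟩ * ((vy ⟨0, Nat.lt_of_succ_lt h2⟩ - vy ⟨1, h2⟩) * ve i))
  | fourG (i) (h2 : 1 < n)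
      (h : ¬c4a q (i.1 ⟨0, Nat.lt_of_succ_lt h2⟩) (i.1 ⟨1, h2⟩) ∧
           ¬c4b q (i.1 ⟨0, Nat.lt_of_succ_lt h2⟩) (i.1 ⟨1, h2⟩) ∧
           ¬c4c q (i.1 ⟨0, Nat.lt_of_succ_lt h2⟩) (i.1 ⟨1, h2⟩) ∧
           ¬c4d p (i.1 ⟨0, Nat.lt_of_succ_lt h2⟩) (i.1 ⟨1, h2⟩) ∧
           ¬c4e p (i.1 ⟨0, Nat.lt_of_succ_lt h2⟩) (i.1 ⟨1, h2⟩) ∧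
           ¬c4f p (i.1 ⟨0, Nat.lt_of_succ_lt h2⟩) (i.1 ⟨1, h2⟩)) :
      VRel p q n β m (vfour h2 i) 0
  | cyc (i) (h0 : 0 < n) :
      VRel p q n β m (vy ⟨0, h0⟩ ^ m (i.1 ⟨0, h0⟩) * ve i) 0

/-- The cyclotomic quotient `V^β_{λ,m}` of the generalized Varagnolo–Vasserot algebra. -/
abbrev VB (p q : K) (n : ℕ) (β : Finset (Fin n → K)) (m : K →₀ ℕ) : Type :=
  RingQuot (VRel p q n β m)

/-! ### Laurent monomials and the intermediary algebras `𝕀_{N,A}` and `𝕀_N` -/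

/-- Given elements `X k` with formal inverses `Xi k`, the monomial `X^x` for `x ∈ ℤ^n`. -/
def XmonOf {F : Type} [Monoid F] (X Xi : Fin n → F) (x : Fin n → ℤ) : F :=
  ((List.finRange n).map fun k => if 0 ≤ x k then X k ^ (x k).toNat
    else Xi k ^ (-x k).toNat).prod

/-- The Laurent polynomial `(X^x - X^{x - tα})/(1 - X^{-α})` (a geometric sum). -/
def divMonOf {F : Type} [Ring F] (X Xi : Fin n → F) (x αv : Fin n → ℤ) (t : ℤ) : F :=
  if 0 ≤ t then ∑ j ∈ Finset.range t.toNat, XmonOf X Xi (x - (j : ℤ) • αv)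
  else -∑ j ∈ Finset.range (-t).toNat, XmonOf X Xi (x + ((j : ℤ) + 1) • αv)

/-- The root `α_b = ε_{b+1} - ε_b` as an exponent vector. -/
def alC (c : Fin (n - 1)) : Fin n → ℤ := fun k => if k = hi c then 1 else if k = lo c then -1 else 0

/-- The root `α_0 = 2ε_1` as an exponent vector. -/
def alB : Fin n → ℤ := fun k => if k.1 = 0 then 2 else 0

/-- Action of `r_0` on exponent vectors. -/
def rx0 (x : Fin n → ℤ) : Fin n → ℤ := fun k => if k.1 = 0 then -x k else x k

/-- Action of the simple transposition `r_{c+1}` on exponent vectors. -/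
def rxC (c : Fin (n - 1)) (x : Fin n → ℤ) : Fin n → ℤ := x ∘ Equiv.swap (lo c) (hi c)

/-- `-α_1` as an exponent vector (so `X^{-α_1} = X_1X_2⁻¹`). -/
def mA1 : Fin n → ℤ := fun k => if k.1 = 0 then 1 else if k.1 = 1 then -1 else 0
/-- `-r_0(α_1)` as an exponent vector (so `X^{-r_0(α_1)} = X_1⁻¹X_2⁻¹`). -/
def mR0A1 : Fin n → ℤ := fun k => if k.1 = 0 then -1 else if k.1 = 1 then -1 else 0
/-- `-r_1(α_0)` as an exponent vector (so `X^{-r_1(α_0)} = X_2⁻²`). -/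
def mR1A0 : Fin n → ℤ := fun k => if k.1 = 1 then -2 else 0
/-- `-α_0` as an exponent vector (so `X^{-α_0} = X_1⁻²`). -/
def mA0 : Fin n → ℤ := fun k => if k.1 = 0 then -2 else 0

/-- Generators of the intermediary algebra `𝕀_{N,A}` of Section 5 (restricted to type A). -/
inductive IAGen (K : Type) (n : ℕ) (α : Finset (Fin n → K)) : Type
  | phi : Fin (n - 1) → IAGen K n α
  | X : Fin n → IAGen K n α
  | Xinv : Fin n → IAGen K n α
  | e : {x // x ∈ α} → IAGen K n α

def tφ {α : Finset (Fin n → K)} (c : Fin (n - 1)) : FreeAlgebra K (IAGen K n α) :=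
  FreeAlgebra.ι K (IAGen.phi c)
def tX {α : Finset (Fin n → K)} (k : Fin n) : FreeAlgebra K (IAGen K n α) :=
  FreeAlgebra.ι K (IAGen.X k)
def tXi {α : Finset (Fin n → K)} (k : Fin n) : FreeAlgebra K (IAGen K n α) :=
  FreeAlgebra.ι K (IAGen.Xinv k)
def te {α : Finset (Fin n → K)} (i : {x // x ∈ α}) : FreeAlgebra K (IAGen K n α) :=
  FreeAlgebra.ι K (IAGen.e i)

/-- The "commutative part" of the relations of `𝕀_{N,A}`: relations among the `X`'s and
the idempotents `e(i)`, including the cyclotomic relation `(X_1 - i_1)^{m(i_1)}e(i) = 0`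
and the nilpotency relations `(X_k - i_k)^N e(i) = 0` for `k ≥ 2`. -/
inductive XARel (n : ℕ) (α : Finset (Fin n → K)) (m : K →₀ ℕ) (N : ℕ) :
    FreeAlgebra K (IAGen K n α) → FreeAlgebra K (IAGen K n α) → Prop
  | Xcomm (k l : Fin n) : XARel n α m N (tX k * tX l) (tX l * tX k)
  | Xunit (k : Fin n) : XARel n α m N (tX k * tXi k) 1
  | Xunit' (k : Fin n) : XARel n α m N (tXi k * tX k) 1
  | esum : XARel n α m N (∑ i ∈ α.attach, te i) 1
  | eidem (i) : XARel n α m N (te i * te i) (te i)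
  | eorth (i j) (h : i ≠ j) : XARel n α m N (te i * te j) 0
  | Xe (k : Fin n) (i) : XARel n α m N (tX k * te i) (te i * tX k)
  | cyc (i) (h0 : 0 < n) :
      XARel n α m N ((tX ⟨0, h0⟩ - algebraMap K (FreeAlgebra K (IAGen K n α)) (i.1 ⟨0, h0⟩)) ^
        m (i.1 ⟨0, h0⟩) * te i) 0
  | nil (i) (k : Fin n) (h : k.1 ≠ 0) :
      XARel n α m N ((tX k - algebraMap K (FreeAlgebra K (IAGen K n α)) (i.1 k)) ^ N * te i) 0

/-- Defining relations of the intermediary algebra `𝕀_{N,A}`.  Partial inverses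
`(⋯)⁻¹e(i)` appearing in the relations of Definition 5.1 are handled by quantifying over
all elements `Z` which invert the relevant denominator `e(i)`-locally, modulo the
commutative relations `XARel` (such a `Z` exists and its class is unique, by the
nilpotency relations). -/
inductive IARel (q : K) (n : ℕ) (α : Finset (Fin n → K)) (m : K →₀ ℕ) (N : ℕ) :
    FreeAlgebra K (IAGen K n α) → FreeAlgebra K (IAGen K n α) → Prop
  | ofX {a b : FreeAlgebra K (IAGen K n α)} (h : XARel n α m N a b) : IARel q n α m N a b
  | phiE (c : Fin (n - 1)) (i : {x // x ∈ α}) (h' : sw c i.1 ∈ α) :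
      IARel q n α m N (tφ c * te i) (te ⟨sw c i.1, h'⟩ * tφ c)
  | phiXne (c : Fin (n - 1)) (i) (x : Fin n → ℤ) (h : i.1 (lo c) ≠ i.1 (hi c)) :
      IARel q n α m N ((tφ c * XmonOf tX tXi x - XmonOf tX tXi (rxC c x) * tφ c) * te i) 0
  | phiXeq (c : Fin (n - 1)) (i) (x : Fin n → ℤ) (h : i.1 (lo c) = i.1 (hi c)) :
      IARel q n α m N ((tφ c * XmonOf tX tXi x - XmonOf tX tXi (rxC c x) * tφ c) * te i)
        ((q • (1 : FreeAlgebra K (IAGen K n α)) - q⁻¹ • XmonOf tX tXi (-alC c)) *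
          (divMonOf tX tXi x (alC c) (x (hi c) - x (lo c)) * te i))
  | phicomm (c c' : Fin (n - 1)) (h : c.1 + 1 < c'.1) :
      IARel q n α m N (tφ c * tφ c') (tφ c' * tφ c)
  | phisqEq (c : Fin (n - 1)) (i) (h : i.1 (lo c) = i.1 (hi c)) :
      IARel q n α m N (tφ c * tφ c * te i) ((q + q⁻¹) • (tφ c * te i))
  | phisqNe (c : Fin (n - 1)) (i) (h : i.1 (lo c) ≠ i.1 (hi c))
      (Z : FreeAlgebra K (IAGen K n α))
      (hZ : RingQuot.mkAlgHom K (XARel n α m N)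
          ((1 - XmonOf tX tXi (alC c)) * ((1 - XmonOf tX tXi (-alC c)) * (Z * te i))) =
        RingQuot.mkAlgHom K (XARel n α m N) (te i)) :
      IARel q n α m N (tφ c * tφ c * te i) (te i + ((q - q⁻¹) ^ 2) • (Z * te i))
  | phibrEq (c c' : Fin (n - 1)) (hcc : c'.1 = c.1 + 1) (i)
      (h1 : i.1 (lo c) = i.1 (hi c)) (h2 : i.1 (hi c) = i.1 (hi c')) :
      IARel q n α m N ((tφ c * tφ c' * tφ c - tφ c' * tφ c * tφ c') * te i)
        ((tφ c - tφ c') * te i)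
  | phibrNe (c c' : Fin (n - 1)) (hcc : c'.1 = c.1 + 1) (i)
      (h1 : i.1 (lo c) = i.1 (hi c')) (h2 : i.1 (lo c) ≠ i.1 (hi c))
      (Z : FreeAlgebra K (IAGen K n α))
      (hZ : RingQuot.mkAlgHom K (XARel n α m N)
          ((1 - XmonOf tX tXi (-alC c)) ^ 2 * ((1 - XmonOf tX tXi (-alC c')) ^ 2 * (Z * te i))) =
        RingQuot.mkAlgHom K (XARel n α m N) (te i)) :
      IARel q n α m N ((tφ c * tφ c' * tφ c - tφ c' * tφ c * tφ c') * te i)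
        (((q - q⁻¹) ^ 2) • ((XmonOf tX tXi (-alC c') - XmonOf tX tXi (-alC c)) *
          ((q • (1 : FreeAlgebra K (IAGen K n α)) - q⁻¹ • XmonOf tX tXi (-alC c - alC c')) *
            (Z * te i))))
  | phibrEls (c c' : Fin (n - 1)) (hcc : c'.1 = c.1 + 1) (i) (h : i.1 (lo c) ≠ i.1 (hi c')) :
      IARel q n α m N ((tφ c * tφ c' * tφ c - tφ c' * tφ c * tφ c') * te i) 0

/-- The intermediary algebra `𝕀_{N,A}`. -/
abbrev IA (q : K) (n : ℕ) (α : Finset (Fin n → K)) (m : K →₀ ℕ) (N : ℕ) : Type :=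
  RingQuot (IARel q n α m N)

/-- Generators of the intermediary algebra `𝕀_N` of Definition 5.1. -/
inductive IBGen (K : Type) (n : ℕ) (β : Finset (Fin n → K)) : Type
  | phi0 : IBGen K n β
  | phi : Fin (n - 1) → IBGen K n β
  | X : Fin n → IBGen K n β
  | Xinv : Fin n → IBGen K n β
  | e : {x // x ∈ β} → IBGen K n β

def uφ0 {β : Finset (Fin n → K)} : FreeAlgebra K (IBGen K n β) := FreeAlgebra.ι K IBGen.phi0
def uφ {β : Finset (Fin n → K)} (c : Fin (n - 1)) : FreeAlgebra K (IBGen K n β) :=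
  FreeAlgebra.ι K (IBGen.phi c)
def uX {β : Finset (Fin n → K)} (k : Fin n) : FreeAlgebra K (IBGen K n β) :=
  FreeAlgebra.ι K (IBGen.X k)
def uXi {β : Finset (Fin n → K)} (k : Fin n) : FreeAlgebra K (IBGen K n β) :=
  FreeAlgebra.ι K (IBGen.Xinv k)
def ue {β : Finset (Fin n → K)} (i : {x // x ∈ β}) : FreeAlgebra K (IBGen K n β) :=
  FreeAlgebra.ι K (IBGen.e i)

/-- The "commutative part" of the relations of `𝕀_N`. -/
inductive XBRel (n : ℕ) (β : Finset (Fin n → K)) (m : K →₀ ℕ) (N : ℕ) :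
    FreeAlgebra K (IBGen K n β) → FreeAlgebra K (IBGen K n β) → Prop
  | Xcomm (k l : Fin n) : XBRel n β m N (uX k * uX l) (uX l * uX k)
  | Xunit (k : Fin n) : XBRel n β m N (uX k * uXi k) 1
  | Xunit' (k : Fin n) : XBRel n β m N (uXi k * uX k) 1
  | esum : XBRel n β m N (∑ i ∈ β.attach, ue i) 1
  | eidem (i) : XBRel n β m N (ue i * ue i) (ue i)
  | eorth (i j) (h : i ≠ j) : XBRel n β m N (ue i * ue j) 0
  | Xe (k : Fin n) (i) : XBRel n β m N (uX k * ue i) (ue i * uX k)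
  | cyc (i) (h0 : 0 < n) :
      XBRel n β m N ((uX ⟨0, h0⟩ - algebraMap K (FreeAlgebra K (IBGen K n β)) (i.1 ⟨0, h0⟩)) ^
        m (i.1 ⟨0, h0⟩) * ue i) 0
  | nil (i) (k : Fin n) (h : k.1 ≠ 0) :
      XBRel n β m N ((uX k - algebraMap K (FreeAlgebra K (IBGen K n β)) (i.1 k)) ^ N * ue i) 0

/-- Case conditions for the modified four-term braid relation of Definition 5.1. -/
def ib4c1 (i1 i2 : K) : Prop := i1 = i2 ∧ i1 ^ 2 = 1 ∧ i2 ^ 2 = 1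
def ib4c2 (i1 i2 : K) : Prop := i1 ≠ i2 ∧ i1 ^ 2 = 1 ∧ i2 ^ 2 = 1
def ib4c3 (i1 i2 : K) : Prop := i1 ≠ i2 ∧ i1 ^ 2 ≠ 1 ∧ i2 ^ 2 = 1
def ib4c4 (i1 i2 : K) : Prop := i1 ≠ i2 ∧ i1 ^ 2 ≠ 1 ∧ i1⁻¹ = i2

/-- `(Φ_0Φ_1Φ_0Φ_1 - Φ_1Φ_0Φ_1Φ_0) e(i)`. -/
def ufour {β : Finset (Fin n → K)} (h2 : 1 < n) (i : {x // x ∈ β}) :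
    FreeAlgebra K (IBGen K n β) :=
  (uφ0 * uφ ⟨0, by omega⟩ * uφ0 * uφ ⟨0, by omega⟩ -
    uφ ⟨0, by omega⟩ * uφ0 * uφ ⟨0, by omega⟩ * uφ0) * ue i

/-- Defining relations of the intermediary algebra `𝕀_N` (Definition 5.1).  Partial
inverses `(⋯)⁻¹e(i)` are handled by quantifying over all local inverses `Z` modulo the
commutative relations `XBRel`; for the elements `Z_b`, `Y_0`, `Y_1` we use the
cancelled expressions (Z-Y) of Remark 5.3. -/
inductive IBRel (p q : K) (n : ℕ) (β : Finset (Fin n → K)) (m : K →₀ ℕ) (N : ℕ) :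
    FreeAlgebra K (IBGen K n β) → FreeAlgebra K (IBGen K n β) → Prop
  | ofX {a b : FreeAlgebra K (IBGen K n β)} (h : XBRel n β m N a b) : IBRel p q n β m N a b
  | phiE (c : Fin (n - 1)) (i : {x // x ∈ β}) (h' : sw c i.1 ∈ β) :
      IBRel p q n β m N (uφ c * ue i) (ue ⟨sw c i.1, h'⟩ * uφ c)
  | phi0E (i : {x // x ∈ β}) (h0 : 0 < n) (h' : invMove h0 i.1 ∈ β) :
      IBRel p q n β m N (uφ0 * ue i) (ue ⟨invMove h0 i.1, h'⟩ * uφ0)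
  | phiXne (c : Fin (n - 1)) (i) (x : Fin n → ℤ) (h : i.1 (lo c) ≠ i.1 (hi c)) :
      IBRel p q n β m N ((uφ c * XmonOf uX uXi x - XmonOf uX uXi (rxC c x) * uφ c) * ue i) 0
  | phiXeq (c : Fin (n - 1)) (i) (x : Fin n → ℤ) (h : i.1 (lo c) = i.1 (hi c)) :
      IBRel p q n β m N ((uφ c * XmonOf uX uXi x - XmonOf uX uXi (rxC c x) * uφ c) * ue i)
        ((q • (1 : FreeAlgebra K (IBGen K n β)) - q⁻¹ • XmonOf uX uXi (-alC c)) *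
          (divMonOf uX uXi x (alC c) (x (hi c) - x (lo c)) * ue i))
  | phi0Xne (i) (x : Fin n → ℤ) (h0 : 0 < n) (h : (i.1 ⟨0, h0⟩)⁻¹ ≠ i.1 ⟨0, h0⟩) :
      IBRel p q n β m N ((uφ0 * XmonOf uX uXi x - XmonOf uX uXi (rx0 x) * uφ0) * ue i) 0
  | phi0Xeq (i) (x : Fin n → ℤ) (h0 : 0 < n) (h : (i.1 ⟨0, h0⟩)⁻¹ = i.1 ⟨0, h0⟩) :
      IBRel p q n β m N ((uφ0 * XmonOf uX uXi x - XmonOf uX uXi (rx0 x) * uφ0) * ue i)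
        ((p • (1 : FreeAlgebra K (IBGen K n β)) - p⁻¹ • XmonOf uX uXi mA0) *
          (divMonOf uX uXi x alB (x ⟨0, h0⟩) * ue i))
  | phicomm (c c' : Fin (n - 1)) (h : c.1 + 1 < c'.1) :
      IBRel p q n β m N (uφ c * uφ c') (uφ c' * uφ c)
  | phi0comm (c : Fin (n - 1)) (h : 1 ≤ c.1) : IBRel p q n β m N (uφ0 * uφ c) (uφ c * uφ0)
  | phisqEq (c : Fin (n - 1)) (i) (h : i.1 (lo c) = i.1 (hi c)) :
      IBRel p q n β m N (uφ c * uφ c * ue i) ((q + q⁻¹) • (uφ c * ue i))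
  | phisqNe (c : Fin (n - 1)) (i) (h : i.1 (lo c) ≠ i.1 (hi c))
      (Z : FreeAlgebra K (IBGen K n β))
      (hZ : RingQuot.mkAlgHom K (XBRel n β m N)
          ((1 - XmonOf uX uXi (alC c)) * ((1 - XmonOf uX uXi (-alC c)) * (Z * ue i))) =
        RingQuot.mkAlgHom K (XBRel n β m N) (ue i)) :
      IBRel p q n β m N (uφ c * uφ c * ue i)
        ((q • (1 : FreeAlgebra K (IBGen K n β)) - q⁻¹ • XmonOf uX uXi (alC c)) *
          ((q • (1 : FreeAlgebra K (IBGen K n β)) - q⁻¹ • XmonOf uX uXi (-alC c)) *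
            (Z * ue i)))
  | phi0sqEq (i) (h0 : 0 < n) (h : (i.1 ⟨0, h0⟩)⁻¹ = i.1 ⟨0, h0⟩) :
      IBRel p q n β m N (uφ0 * uφ0 * ue i) ((p + p⁻¹) • (uφ0 * ue i))
  | phi0sqNe (i) (h0 : 0 < n) (h : (i.1 ⟨0, h0⟩)⁻¹ ≠ i.1 ⟨0, h0⟩)
      (Z : FreeAlgebra K (IBGen K n β))
      (hZ : RingQuot.mkAlgHom K (XBRel n β m N)
          ((1 - XmonOf uX uXi alB) * ((1 - XmonOf uX uXi mA0) * (Z * ue i))) =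
        RingQuot.mkAlgHom K (XBRel n β m N) (ue i)) :
      IBRel p q n β m N (uφ0 * uφ0 * ue i)
        ((p • (1 : FreeAlgebra K (IBGen K n β)) - p⁻¹ • XmonOf uX uXi alB) *
          ((p • (1 : FreeAlgebra K (IBGen K n β)) - p⁻¹ • XmonOf uX uXi mA0) *
            (Z * ue i)))
  | phibrEq (c c' : Fin (n - 1)) (hcc : c'.1 = c.1 + 1) (i)
      (h1 : i.1 (lo c) = i.1 (hi c)) (h2 : i.1 (hi c) = i.1 (hi c')) :
      IBRel p q n β m N ((uφ c * uφ c' * uφ c - uφ c' * uφ c * uφ c') * ue i)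
        ((uφ c - uφ c') * ue i)
  | phibrNe (c c' : Fin (n - 1)) (hcc : c'.1 = c.1 + 1) (i)
      (h1 : i.1 (lo c) = i.1 (hi c')) (h2 : i.1 (lo c) ≠ i.1 (hi c))
      (Z : FreeAlgebra K (IBGen K n β))
      (hZ : RingQuot.mkAlgHom K (XBRel n β m N)
          ((1 - XmonOf uX uXi (-alC c)) ^ 2 * ((1 - XmonOf uX uXi (-alC c')) ^ 2 * (Z * ue i))) =
        RingQuot.mkAlgHom K (XBRel n β m N) (ue i)) :
      IBRel p q n β m N ((uφ c * uφ c' * uφ c - uφ c' * uφ c * uφ c') * ue i)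
        (((q - q⁻¹) ^ 2) • ((XmonOf uX uXi (-alC c') - XmonOf uX uXi (-alC c)) *
          ((q • (1 : FreeAlgebra K (IBGen K n β)) - q⁻¹ • XmonOf uX uXi (-alC c - alC c')) *
            (Z * ue i))))
  | phibrEls (c c' : Fin (n - 1)) (hcc : c'.1 = c.1 + 1) (i) (h : i.1 (lo c) ≠ i.1 (hi c')) :
      IBRel p q n β m N ((uφ c * uφ c' * uφ c - uφ c' * uφ c * uφ c') * ue i) 0
  | four1 (i) (h2 : 1 < n) (h : ib4c1 (i.1 ⟨0, Nat.lt_of_succ_lt h2⟩) (i.1 ⟨1, h2⟩)) :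
      IBRel p q n β m N (ufour h2 i)
        ((p * q⁻¹ + p⁻¹ * q) • ((uφ0 * uφ ⟨0, by omega⟩ - uφ ⟨0, by omega⟩ * uφ0) * ue i))
  | four2 (i) (h2 : 1 < n) (h : ib4c2 (i.1 ⟨0, Nat.lt_of_succ_lt h2⟩) (i.1 ⟨1, h2⟩))
      (Z : FreeAlgebra K (IBGen K n β))
      (hZ : RingQuot.mkAlgHom K (XBRel n β m N)
          ((1 - XmonOf uX uXi mA1) ^ 2 * ((1 - XmonOf uX uXi mR0A1) ^ 2 * (Z * ue i))) =
        RingQuot.mkAlgHom K (XBRel n β m N) (ue i)) :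
      IBRel p q n β m N (ufour h2 i)
        (-(((q - q⁻¹) ^ 2) •
          ((uφ0 * (1 - XmonOf uX uXi mA0) -
              (p • (1 : FreeAlgebra K (IBGen K n β)) - p⁻¹ • XmonOf uX uXi mA0)) *
            (XmonOf uX uXi mA1 *
              ((p • (1 : FreeAlgebra K (IBGen K n β)) - p⁻¹ • XmonOf uX uXi mR1A0) *
                (Z * ue i))))))
  | four3 (i) (h2 : 1 < n) (h : ib4c3 (i.1 ⟨0, Nat.lt_of_succ_lt h2⟩) (i.1 ⟨1, h2⟩))
      (Z : FreeAlgebra K (IBGen K n β))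
      (hZ : RingQuot.mkAlgHom K (XBRel n β m N)
          ((1 - XmonOf uX uXi mA1) ^ 2 * ((1 - XmonOf uX uXi mR0A1) ^ 2 * (Z * ue i))) =
        RingQuot.mkAlgHom K (XBRel n β m N) (ue i)) :
      IBRel p q n β m N (ufour h2 i)
        (-(((q - q⁻¹) ^ 2) •
          (uφ0 * ((1 - XmonOf uX uXi mA0) *
            (XmonOf uX uXi mA1 *
              ((p • (1 : FreeAlgebra K (IBGen K n β)) - p⁻¹ • XmonOf uX uXi mR1A0) *
                (Z * ue i)))))))
  | four4 (i) (h2 : 1 < n) (h : ib4c4 (i.1 ⟨0, Nat.lt_of_succ_lt h2⟩) (i.1 ⟨1, h2⟩))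
      (Z : FreeAlgebra K (IBGen K n β))
      (hZ : RingQuot.mkAlgHom K (XBRel n β m N)
          ((1 - XmonOf uX uXi mA0) ^ 2 * ((1 - XmonOf uX uXi mR1A0) ^ 2 * (Z * ue i))) =
        RingQuot.mkAlgHom K (XBRel n β m N) (ue i)) :
      IBRel p q n β m N (ufour h2 i)
        (((p - p⁻¹) ^ 2) •
          (uφ ⟨0, by omega⟩ * ((1 - XmonOf uX uXi mA1) *
            (XmonOf uX uXi mA0 * ((1 + XmonOf uX uXi mA1) *
              ((1 + XmonOf uX uXi mR0A1) *
                ((q • (1 : FreeAlgebra K (IBGen K n β)) - q⁻¹ • XmonOf uX uXi mR0A1) *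
                  (Z * ue i))))))))
  | four5 (i) (h2 : 1 < n)
      (h : ¬ib4c1 (i.1 ⟨0, Nat.lt_of_succ_lt h2⟩) (i.1 ⟨1, h2⟩) ∧
           ¬ib4c2 (i.1 ⟨0, Nat.lt_of_succ_lt h2⟩) (i.1 ⟨1, h2⟩) ∧
           ¬ib4c3 (i.1 ⟨0, Nat.lt_of_succ_lt h2⟩) (i.1 ⟨1, h2⟩) ∧
           ¬ib4c4 (i.1 ⟨0, Nat.lt_of_succ_lt h2⟩) (i.1 ⟨1, h2⟩)) :
      IBRel p q n β m N (ufour h2 i) 0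

/-- The intermediary algebra `𝕀_N` of Definition 5.1. -/
abbrev IB (p q : K) (n : ℕ) (β : Finset (Fin n → K)) (m : K →₀ ℕ) (N : ℕ) : Type :=
  RingQuot (IBRel p q n β m N)

/-! ### Formal power series helpers -/

/-- Composition `f ∘ g` of univariate power series (intended for `g` with zero constant
term, in which case this is the substitution of `g` into `f`). -/
def comp1 (f g : PowerSeries K) : PowerSeries K :=
  PowerSeries.mk fun d => ∑ k ∈ Finset.range (d + 1),
    PowerSeries.coeff (R := K) k f * PowerSeries.coeff (R := K) d (g ^ k)

/-- The power series `f(z) = z + z/(1-z)` used for the type B isomorphism. -/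
def fVV : PowerSeries K := PowerSeries.X + PowerSeries.X * (1 - PowerSeries.X)⁻¹

/-- The embedding `K[[z]] → K[[y_1,…,y_n]]`, `z ↦ y_a`. -/
def emb1 (a : Fin n) (h : PowerSeries K) : MvPowerSeries (Fin n) K :=
  fun d => if d.support ⊆ {a} then PowerSeries.coeff (R := K) (d a) h else 0

/-- The embedding `K[[z,z']] → K[[y_1,…,y_n]]`, `z ↦ y_a`, `z' ↦ y_b` (for `a ≠ b`). -/
def emb2 (a b : Fin n) (P : MvPowerSeries (Fin 2) K) : MvPowerSeries (Fin n) K :=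
  fun d => if d.support ⊆ {a, b} then
    MvPowerSeries.coeff (σ := Fin 2) (R := K) (Finsupp.single 0 (d a) + Finsupp.single 1 (d b)) P else 0

/-- The action of a permutation of the variables on `K[[y_1,…,y_n]]`. -/
def permPS (σ : Equiv.Perm (Fin n)) (P : MvPowerSeries (Fin n) K) :
    MvPowerSeries (Fin n) K :=
  fun d => MvPowerSeries.coeff (R := K) (Finsupp.equivMapDomain σ d) P

/-- The action of `r_0` (`y_1 ↦ -y_1`) on `K[[y_1,…,y_n]]`. -/
def negFirst (h0 : 0 < n) (P : MvPowerSeries (Fin n) K) : MvPowerSeries (Fin n) K :=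
  fun d => (-1 : K) ^ d ⟨0, h0⟩ * MvPowerSeries.coeff (R := K) d P

/-- `X_k(i) = i_k (1 - g(y_k))` as an element of `K[[y_1,…,y_n]]`. -/
def XofI (g : PowerSeries K) (i : Fin n → K) (k : Fin n) : MvPowerSeries (Fin n) K :=
  MvPowerSeries.C (σ := Fin n) (R := K) (i k) * (1 - emb1 k g)

/-- `X̄_1(i) = X_1(i)⁻¹ = i_1⁻¹ (1 - g(y_1))⁻¹`. -/
def XbarofI (g : PowerSeries K) (i : Fin n → K) (h0 : 0 < n) : MvPowerSeries (Fin n) K :=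
  MvPowerSeries.C (σ := Fin n) (R := K) (i ⟨0, h0⟩)⁻¹ * (1 - emb1 ⟨0, h0⟩ g)⁻¹

/-- The evaluated series `Q_k(i) ∈ K[[y_k, y_{k+1}]] ⊆ K[[y_1,…,y_n]]`. -/
def Qev {n : ℕ} (Q : Fin (n - 1) → K → K → MvPowerSeries (Fin 2) K)
    (c : Fin (n - 1)) (i : Fin n → K) : MvPowerSeries (Fin n) K :=
  emb2 (lo c) (hi c) (Q c (i (lo c)) (i (hi c)))

/-- Condition (★1). -/
def Star1 (q : K) (g : PowerSeries K) (S : Set K) (n : ℕ)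
    (Q : Fin (n - 1) → K → K → MvPowerSeries (Fin 2) K) : Prop :=
  ∀ i : Fin n → K, (∀ k, i k ∈ S) → ∀ c : Fin (n - 1), i (lo c) = i (hi c) →
    Qev Q c i * (emb1 (hi c) g - emb1 (lo c) g) =
      MvPowerSeries.C (σ := Fin n) (R := K) (i (lo c))⁻¹ *
        ((MvPowerSeries.C (σ := Fin n) (R := K) q⁻¹ * XofI g i (lo c) -
            MvPowerSeries.C (σ := Fin n) (R := K) q * XofI g i (hi c)) *
          (MvPowerSeries.X (hi c) - MvPowerSeries.X (lo c)))

/-- The product `{}^{r_k}Q_k(r_k(i)) ⋅ Q_k(i)`. -/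
def QQ2 {n : ℕ} (Q : Fin (n - 1) → K → K → MvPowerSeries (Fin 2) K)
    (c : Fin (n - 1)) (i : Fin n → K) : MvPowerSeries (Fin n) K :=
  permPS (Equiv.swap (lo c) (hi c)) (Qev Q c (sw c i)) * Qev Q c i

/-- `(X_k(i) - X_{k+1}(i))(X_{k+1}(i) - X_k(i))`. -/
def DD2 (g : PowerSeries K) (i : Fin n → K) (c : Fin (n - 1)) : MvPowerSeries (Fin n) K :=
  (XofI g i (lo c) - XofI g i (hi c)) * (XofI g i (hi c) - XofI g i (lo c))

/-- `(qX_k(i) - q⁻¹X_{k+1}(i))(qX_{k+1}(i) - q⁻¹X_k(i))`. -/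
def NN2 (q : K) (g : PowerSeries K) (i : Fin n → K) (c : Fin (n - 1)) :
    MvPowerSeries (Fin n) K :=
  (MvPowerSeries.C (σ := Fin n) (R := K) q * XofI g i (lo c) -
      MvPowerSeries.C (σ := Fin n) (R := K) q⁻¹ * XofI g i (hi c)) *
    (MvPowerSeries.C (σ := Fin n) (R := K) q * XofI g i (hi c) -
      MvPowerSeries.C (σ := Fin n) (R := K) q⁻¹ * XofI g i (lo c))

/-- Condition (★2). -/
def Star2 (q : K) (g : PowerSeries K) (S : Set K) (n : ℕ)
    (Q : Fin (n - 1) → K → K → MvPowerSeries (Fin 2) K) : Prop :=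
  ∀ i : Fin n → K, (∀ k, i k ∈ S) → ∀ c : Fin (n - 1),
    (qnon q (i (lo c)) (i (hi c)) → QQ2 Q c i * DD2 g i c = NN2 q g i c) ∧
    (qbak q (i (lo c)) (i (hi c)) →
      QQ2 Q c i * ((MvPowerSeries.X (hi c) - MvPowerSeries.X (lo c)) * DD2 g i c) =
        NN2 q g i c) ∧
    (qarr q (i (lo c)) (i (hi c)) →
      QQ2 Q c i * ((MvPowerSeries.X (lo c) - MvPowerSeries.X (hi c)) * DD2 g i c) =
        NN2 q g i c) ∧
    (qdbl q (i (lo c)) (i (hi c)) →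
      QQ2 Q c i * ((MvPowerSeries.X (hi c) - MvPowerSeries.X (lo c)) *
        ((MvPowerSeries.X (lo c) - MvPowerSeries.X (hi c)) * DD2 g i c)) = NN2 q g i c)

/-- Condition (★3). -/
def Star3 (S : Set K) (n : ℕ)
    (Q : Fin (n - 1) → K → K → MvPowerSeries (Fin 2) K) : Prop :=
  ∀ i : Fin n → K, (∀ k, i k ∈ S) → ∀ c c' : Fin (n - 1), c'.1 = c.1 + 1 →
    permPS (Equiv.swap (lo c) (hi c)) (Qev Q c' (sw c' (sw c i))) =
      permPS (Equiv.swap (lo c') (hi c')) (Qev Q c (sw c (sw c' i)))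

/-- Condition (★4). -/
def Star4 (p : K) (g : PowerSeries K) (S : Set K) (n : ℕ) (Q0 : K → PowerSeries K) : Prop :=
  ∀ i : Fin n → K, (∀ k, i k ∈ S) → ∀ h0 : 0 < n, (i ⟨0, h0⟩)⁻¹ = i ⟨0, h0⟩ →
    emb1 ⟨0, h0⟩ (Q0 (i ⟨0, h0⟩)) =
      MvPowerSeries.C (σ := Fin n) (R := K) (i ⟨0, h0⟩)⁻¹ *
        (MvPowerSeries.C (σ := Fin n) (R := K) p⁻¹ * XbarofI g i h0 -
          MvPowerSeries.C (σ := Fin n) (R := K) p * XofI g i ⟨0, h0⟩)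

/-- The product `{}^{r_0}Q_0(r_0(i)) ⋅ Q_0(i)`. -/
def QQ0 {n : ℕ} (Q0 : K → PowerSeries K) (h0 : 0 < n) (i : Fin n → K) :
    MvPowerSeries (Fin n) K :=
  negFirst h0 (emb1 ⟨0, h0⟩ (Q0 (i ⟨0, h0⟩)⁻¹)) * emb1 ⟨0, h0⟩ (Q0 (i ⟨0, h0⟩))

/-- `(X̄_1(i) - X_1(i))(X_1(i) - X̄_1(i))`. -/
def DD0 (g : PowerSeries K) (h0 : 0 < n) (i : Fin n → K) : MvPowerSeries (Fin n) K :=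
  (XbarofI g i h0 - XofI g i ⟨0, h0⟩) * (XofI g i ⟨0, h0⟩ - XbarofI g i h0)

/-- `(pX̄_1(i) - p⁻¹X_1(i))(pX_1(i) - p⁻¹X̄_1(i))`. -/
def NN0 (p : K) (g : PowerSeries K) (h0 : 0 < n) (i : Fin n → K) :
    MvPowerSeries (Fin n) K :=
  (MvPowerSeries.C (σ := Fin n) (R := K) p * XbarofI g i h0 -
      MvPowerSeries.C (σ := Fin n) (R := K) p⁻¹ * XofI g i ⟨0, h0⟩) *
    (MvPowerSeries.C (σ := Fin n) (R := K) p * XofI g i ⟨0, h0⟩ -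
      MvPowerSeries.C (σ := Fin n) (R := K) p⁻¹ * XbarofI g i h0)

/-- Condition (★5). -/
def Star5 (p : K) (g : PowerSeries K) (S : Set K) (n : ℕ) (Q0 : K → PowerSeries K) : Prop :=
  ∀ i : Fin n → K, (∀ k, i k ∈ S) → ∀ h0 : 0 < n,
    (pnon p (i ⟨0, h0⟩) → QQ0 Q0 h0 i * DD0 g h0 i = NN0 p g h0 i) ∧
    (parr p (i ⟨0, h0⟩) →
      QQ0 Q0 h0 i * (MvPowerSeries.X ⟨0, h0⟩ * DD0 g h0 i) = NN0 p g h0 i) ∧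
    (pbak p (i ⟨0, h0⟩) →
      QQ0 Q0 h0 i * (-MvPowerSeries.X ⟨0, h0⟩ * DD0 g h0 i) = NN0 p g h0 i) ∧
    (pdbl p (i ⟨0, h0⟩) →
      QQ0 Q0 h0 i * (-(MvPowerSeries.X ⟨0, h0⟩ * MvPowerSeries.X ⟨0, h0⟩) * DD0 g h0 i) =
        NN0 p g h0 i)

/-- Condition (★6). -/
def Star6 (S : Set K) (n : ℕ) (Q0 : K → PowerSeries K)
    (Q : Fin (n - 1) → K → K → MvPowerSeries (Fin 2) K) : Prop :=
  ∀ i : Fin n → K, (∀ k, i k ∈ S) → ∀ h2 : 1 < n,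
    (permPS (Equiv.swap ⟨0, Nat.lt_of_succ_lt h2⟩ ⟨1, h2⟩)
        (negFirst (Nat.lt_of_succ_lt h2)
          (permPS (Equiv.swap ⟨0, Nat.lt_of_succ_lt h2⟩ ⟨1, h2⟩)
            (emb1 ⟨0, Nat.lt_of_succ_lt h2⟩ (Q0 (i ⟨0, Nat.lt_of_succ_lt h2⟩))))) =
      emb1 ⟨0, Nat.lt_of_succ_lt h2⟩ (Q0 (i ⟨0, Nat.lt_of_succ_lt h2⟩))) ∧
    (negFirst (Nat.lt_of_succ_lt h2)
        (permPS (Equiv.swap ⟨0, Nat.lt_of_succ_lt h2⟩ ⟨1, h2⟩)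
          (negFirst (Nat.lt_of_succ_lt h2)
            (Qev Q ⟨0, by omega⟩
              (invMove (Nat.lt_of_succ_lt h2)
                (sw ⟨0, by omega⟩ (invMove (Nat.lt_of_succ_lt h2) i)))))) =
      Qev Q ⟨0, by omega⟩ i)

/-! ### Dimension vectors -/

/-- The dimension vector attached to a tuple: `dimvec i s = #{k : i_k ∈ {s, s⁻¹}}`. -/
def dimvec (i : Fin n → K) : K → ℕ := fun s =>
  (Finset.univ.filter fun k => i k = s ∨ i k = s⁻¹).card

end PdAW

end
namespace PdAW

/-!
For `i ≠ j` put `Q(i,j) = (qX - q⁻¹X') / (X - X')` in `K[[z,z']]`, where `X = i(1 - g(z))` and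
`X' = j(1 - g(z'))`; the denominator is a unit since its constant term is `i - j`. When `j = q²i`
the numerator equals `qi (g(z') - g(z))`, so it is divisible by `z' - z`, and that factor is
dropped from `Q(i,j)`. For `i = j` put
`Q(i,i) = (q⁻¹(1 - g(z)) - q(1 - g(z'))) (z' - z) / (g(z') - g(z))`, a unit because `g` has an
invertible linear coefficient.

Multiplying the defining identity of `Q(i,j)` with the swap of the one of `Q(j,i)` gives (★2):
the factors `z - z'` dropped along the way are exactly those attached to the arrows between `i`
and `j`. Since `Q` does not depend on `k`, both sides of (★3) are `Q(i_{k+2}, i_k)` placed on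
the variables `y_k, y_{k+2}`. All the embeddings of `K[[z]]` and `K[[z,z']]` into
`K[[y_1,…,y_n]]` are renamings of variables, hence algebra maps, which transports identities.
-/

open MvPowerSeries

theorem _root_.MvPowerSeries.coeff_rename_equiv {σ τ R : Type*} [CommSemiring R] (e : σ ≃ τ)
    (p : MvPowerSeries σ R) (d : τ →₀ ℕ) :
    coeff d (rename e p) = coeff (Finsupp.equivMapDomain e.symm d) p := by
  rw [← coeff_embDomain_rename e.toEmbedding p]
  congr 2
  ext t
  simp [Finsupp.embDomain_eq_mapDomain, ← Finsupp.equivMapDomain_eq_mapDomain]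

theorem _root_.MvPowerSeries.coeff_rename_eq_zero_of_not_subset {σ τ R : Type*}
    [CommSemiring R] (f : σ → τ) [Filter.TendstoCofinite f] (p : MvPowerSeries σ R)
    {s : Finset τ} (hf : ∀ x, f x ∈ s) {d : τ →₀ ℕ} (hd : ¬ d.support ⊆ s) :
    coeff d (rename f p) = 0 := by
  refine coeff_rename_eq_zero _ _ ?_
  rintro ⟨x, rfl⟩
  refine hd (Finsupp.mapDomain_support.trans ?_)
  intro t ht
  obtain ⟨x, -, rfl⟩ := Finset.mem_image.mp ht
  exact hf x

theorem lo_ne_hi {n : ℕ} (c : Fin (n - 1)) : lo c ≠ hi c := by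
  simp [lo, hi, Fin.ext_iff]

theorem sw_apply_lo {K : Type} {n : ℕ} (c : Fin (n - 1)) (i : Fin n → K) :
    sw c i (lo c) = i (hi c) :=
  congrArg i (Equiv.swap_apply_left _ _)

theorem sw_apply_hi {K : Type} {n : ℕ} (c : Fin (n - 1)) (i : Fin n → K) :
    sw c i (hi c) = i (lo c) :=
  congrArg i (Equiv.swap_apply_right _ _)

section

variable {K : Type} [Field K] {n : ℕ}

theorem coeff_one_comp1 (f g : PowerSeries K) :
    PowerSeries.coeff 1 (comp1 f g) = PowerSeries.coeff 1 f * PowerSeries.coeff 1 g := by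
  simp [comp1, Finset.sum_range_succ]

theorem emb1_eq_rename (a : Fin n) (h : PowerSeries K) :
    emb1 a h = rename (fun _ : Unit => a) h := by
  let e : Unit ↪ Fin n := ⟨fun _ => a, fun _ _ _ => rfl⟩
  ext d
  show (if d.support ⊆ {a} then _ else 0) = _
  split_ifs with hd
  · have hd' : d = Finsupp.embDomain e (Finsupp.single () (d a)) := by
      rw [Finsupp.embDomain_single]
      exact Finsupp.support_subset_singleton.mp hd
    conv_rhs => rw [hd']
    exact (coeff_embDomain_rename e h _).symm
  · exact (coeff_rename_eq_zero_of_not_subset _ h (fun _ => Finset.mem_singleton_self a) hd).symm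

theorem emb2_eq_rename {a b : Fin n} (hab : a ≠ b) (P : MvPowerSeries (Fin 2) K) :
    emb2 a b P = rename ![a, b] P := by
  let e : Fin 2 ↪ Fin n := ⟨![a, b], by
    intro x y; fin_cases x <;> fin_cases y <;> simp [hab, hab.symm]⟩
  ext d
  show (if d.support ⊆ {a, b} then _ else 0) = _
  split_ifs with hd
  · have hd' : d = Finsupp.embDomain e (Finsupp.single 0 (d a) + Finsupp.single 1 (d b)) := by
      rw [Finsupp.embDomain_add, Finsupp.embDomain_single, Finsupp.embDomain_single]
      show d = Finsupp.single a (d a) + Finsupp.single b (d b)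
      ext t
      by_cases ha : t = a
      · subst ha; simp [hab]
      by_cases hb : t = b
      · subst hb; simp [Ne.symm hab]
      · have : t ∉ d.support := fun ht => by simpa [ha, hb] using hd ht
        simp_all [eq_comm]
    conv_rhs => rw [hd']
    exact (coeff_embDomain_rename e P _).symm
  · refine (coeff_rename_eq_zero_of_not_subset _ P (fun x => ?_) hd).symm
    fin_cases x <;> simp

theorem permPS_eq_rename (σ : Equiv.Perm (Fin n)) (P : MvPowerSeries (Fin n) K) :
    permPS σ P = rename σ.symm P := by
  ext d
  rw [coeff_rename_equiv, Equiv.symm_symm]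
  rfl

theorem rename_emb1 {m : ℕ} (f : Fin m → Fin n) (s : Fin m) (h : PowerSeries K) :
    rename f (emb1 s h) = emb1 (f s) h := by
  rw [emb1_eq_rename, emb1_eq_rename, rename_rename]
  rfl

theorem constantCoeff_emb1 {g : PowerSeries K} (hg0 : PowerSeries.constantCoeff g = 0)
    (s : Fin n) : constantCoeff (emb1 s g) = 0 := by
  rw [emb1_eq_rename, constantCoeff_rename]
  exact hg0

theorem Qev_eq_rename (Q : Fin (n - 1) → K → K → MvPowerSeries (Fin 2) K) (c : Fin (n - 1))
    (i : Fin n → K) : Qev Q c i = rename ![lo c, hi c] (Q c (i (lo c)) (i (hi c))) :=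
  emb2_eq_rename (lo_ne_hi c) _

theorem QQ2_eq_rename (Q : Fin (n - 1) → K → K → MvPowerSeries (Fin 2) K) (c : Fin (n - 1))
    (i : Fin n → K) :
    QQ2 Q c i = rename ![hi c, lo c] (Q c (i (hi c)) (i (lo c))) *
      rename ![lo c, hi c] (Q c (i (lo c)) (i (hi c))) := by
  rw [QQ2, Qev_eq_rename, Qev_eq_rename, sw_apply_lo, sw_apply_hi, permPS_eq_rename,
    rename_rename]
  congr 3
  ext s
  fin_cases s <;> simp

noncomputable def eigenX {m : ℕ} (g : PowerSeries K) (a : K) (s : Fin m) :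
    MvPowerSeries (Fin m) K :=
  C a * (1 - emb1 s g)

theorem XofI_eq_eigenX (g : PowerSeries K) (i : Fin n → K) (k : Fin n) :
    XofI g i k = eigenX g (i k) k :=
  rfl

theorem rename_eigenX {m : ℕ} (f : Fin m → Fin n) (g : PowerSeries K) (a : K) (s : Fin m) :
    rename f (eigenX g a s) = eigenX g a (f s) := by
  simp [eigenX, rename_emb1]

theorem constantCoeff_eigenX {g : PowerSeries K} (hg0 : PowerSeries.constantCoeff g = 0)
    (a : K) (s : Fin n) : constantCoeff (eigenX g a s) = a := by
  simp [eigenX, constantCoeff_emb1 hg0]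

/-- The difference quotient `(g(z') - g(z)) / (z' - z)`. -/
noncomputable def slope (g : PowerSeries K) : MvPowerSeries (Fin 2) K :=
  fun d => PowerSeries.coeff (d 0 + d 1 + 1) g

theorem constantCoeff_slope (g : PowerSeries K) :
    constantCoeff (slope g) = PowerSeries.coeff 1 g :=
  rfl

theorem coeff_X_mul_slope (g : PowerSeries K) (s : Fin 2) (d : Fin 2 →₀ ℕ) :
    coeff d (X s * slope g) = if d s = 0 then 0 else PowerSeries.coeff (d 0 + d 1) g := by
  simp only [X, coeff_monomial_mul, Finsupp.single_le_iff, one_mul]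
  by_cases hs : d s = 0
  · simp [hs]
  · rw [if_pos (by omega), if_neg hs]
    show PowerSeries.coeff (_ + _ + 1) g = _
    fin_cases s <;>
      simp only [Fin.zero_eta, Fin.mk_one, Fin.isValue, Finsupp.coe_tsub, Pi.sub_apply,
        Finsupp.single_eq_same, Finsupp.single_eq_of_ne, ne_eq, one_ne_zero, zero_ne_one,
        not_false_eq_true, tsub_zero] at hs ⊢ <;>
      congr 2 <;> omega

theorem coeff_emb1_fin_two (g : PowerSeries K) (s : Fin 2) (d : Fin 2 →₀ ℕ) :
    coeff d (emb1 s g) = if d (1 - s) = 0 then PowerSeries.coeff (d s) g else 0 := by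
  show (if d.support ⊆ {s} then _ else 0) = _
  simp only [Finset.subset_iff, Finsupp.mem_support_iff, Finset.mem_singleton]
  fin_cases s <;> simp [Fin.forall_fin_two]

theorem X_sub_X_mul_slope {g : PowerSeries K} (hg0 : PowerSeries.constantCoeff g = 0) :
    (X 1 - X 0) * slope g = emb1 1 g - emb1 0 g := by
  ext d
  rw [sub_mul, map_sub, map_sub, coeff_X_mul_slope, coeff_X_mul_slope, coeff_emb1_fin_two,
    coeff_emb1_fin_two]
  by_cases h0 : d 0 = 0 <;> by_cases h1 : d 1 = 0 <;> simp [h0, h1, hg0]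

noncomputable def Qseries (q : K) (g : PowerSeries K) (i j : K) : MvPowerSeries (Fin 2) K :=
  if i = j then (C q⁻¹ * (1 - emb1 0 g) - C q * (1 - emb1 1 g)) * (slope g)⁻¹
  else if j = q ^ 2 * i then -(C (q * i) * slope g) * (eigenX g i 0 - eigenX g j 1)⁻¹
  else (C q * eigenX g i 0 - C q⁻¹ * eigenX g j 1) * (eigenX g i 0 - eigenX g j 1)⁻¹

/-- The factor `z - z'` that `Qseries q g i j` lacks when `i → j`. -/
noncomputable def arrowFactor (q i j : K) : MvPowerSeries (Fin 2) K :=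
  if j = q ^ 2 * i then X 0 - X 1 else 1

theorem rename_arrowFactor (f : Fin 2 → Fin n) (q i j : K) :
    rename f (arrowFactor q i j) = if j = q ^ 2 * i then X (f 0) - X (f 1) else 1 := by
  unfold arrowFactor
  split_ifs <;> simp

theorem ne_of_eq_sq_mul {q a b : K} (hq2 : q ^ 2 ≠ 1) (ha : a ≠ 0) (h : b = q ^ 2 * a) :
    a ≠ b := by
  rintro rfl
  exact hq2 (mul_right_cancel₀ ha (by rw [one_mul]; exact h.symm))

section Qseries

variable {q : K} {g : PowerSeries K}

theorem Qseries_self_mul (hg0 : PowerSeries.constantCoeff g = 0)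
    (hg1 : PowerSeries.coeff 1 g ≠ 0) {a : K} (ha : a ≠ 0) :
    Qseries q g a a * (emb1 1 g - emb1 0 g) =
      C a⁻¹ * ((C q⁻¹ * eigenX g a 0 - C q * eigenX g a 1) * (X 1 - X 0)) := by
  have hu := MvPowerSeries.inv_mul_cancel (slope g) (by rwa [constantCoeff_slope])
  have hCa : C a⁻¹ * C a = (1 : MvPowerSeries (Fin 2) K) := by
    rw [← map_mul, inv_mul_cancel₀ ha, map_one]
  rw [Qseries, if_pos rfl, ← X_sub_X_mul_slope hg0]
  simp only [eigenX]
  linear_combination (X 1 - X 0) * (C q⁻¹ * (1 - emb1 0 g) - C q * (1 - emb1 1 g)) * (hu - hCa)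

theorem Qseries_mul_arrowFactor (hg0 : PowerSeries.constantCoeff g = 0) (hq : q ≠ 0) {i j : K}
    (hij : i ≠ j) :
    Qseries q g i j * (eigenX g i 0 - eigenX g j 1) * arrowFactor q i j =
      C q * eigenX g i 0 - C q⁻¹ * eigenX g j 1 := by
  have hu : (eigenX g i 0 - eigenX g j 1)⁻¹ *
      (eigenX g i 0 - eigenX g j 1 : MvPowerSeries (Fin 2) K) = 1 :=
    MvPowerSeries.inv_mul_cancel _ (by simp [constantCoeff_eigenX hg0, sub_ne_zero.mpr hij])
  rw [Qseries, if_neg hij, arrowFactor]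
  split_ifs with hj
  · have hslope := X_sub_X_mul_slope hg0
    have hC : C q⁻¹ * C j = (C (q * i) : MvPowerSeries (Fin 2) K) := by
      rw [← map_mul, hj]; congr 1; field_simp
    simp only [eigenX] at hu ⊢
    linear_combination (C (q * i) * slope g * (X 1 - X 0)) * hu + C (q * i) * hslope
      + (1 - emb1 1 g) * hC + (1 - emb1 0 g) * map_mul C q i
  · linear_combination (C q * eigenX g i 0 - C q⁻¹ * eigenX g j 1) * hu

theorem rename_swap_Qseries_mul_Qseries (hg0 : PowerSeries.constantCoeff g = 0) (hq : q ≠ 0)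
    {i j : K} (hij : i ≠ j) :
    rename (Equiv.swap 0 1) (Qseries q g j i) * Qseries q g i j *
        ((eigenX g i 0 - eigenX g j 1) * (eigenX g j 1 - eigenX g i 0) *
          (arrowFactor q i j * rename (Equiv.swap 0 1) (arrowFactor q j i))) =
      (C q * eigenX g i 0 - C q⁻¹ * eigenX g j 1) *
        (C q * eigenX g j 1 - C q⁻¹ * eigenX g i 0) := by
  have hij' := Qseries_mul_arrowFactor hg0 hq hij
  have hji' := congrArg (rename (Equiv.swap (0 : Fin 2) 1))
    (Qseries_mul_arrowFactor hg0 hq hij.symm)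
  simp only [map_mul, map_sub, rename_C, rename_eigenX, Equiv.swap_apply_left,
    Equiv.swap_apply_right] at hji'
  linear_combination (rename (Equiv.swap 0 1) (Qseries q g j i) *
      (eigenX g j 1 - eigenX g i 0) * rename (Equiv.swap 0 1) (arrowFactor q j i)) * hij' +
    (C q * eigenX g i 0 - C q⁻¹ * eigenX g j 1) * hji'

theorem isUnit_Qseries (hg0 : PowerSeries.constantCoeff g = 0) (hg1 : PowerSeries.coeff 1 g ≠ 0)
    (hq : q ≠ 0) (hq2 : q ^ 2 ≠ 1) {i : K} (hi : i ≠ 0) (j : K) :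
    IsUnit (Qseries q g i j) := by
  rw [MvPowerSeries.isUnit_iff_constantCoeff, isUnit_iff_ne_zero, Qseries]
  split_ifs with hij hj
  · simp only [map_mul, map_sub, constantCoeff_C, constantCoeff_one, constantCoeff_emb1 hg0,
      sub_zero, mul_one, constantCoeff_inv, constantCoeff_slope, ne_eq, mul_eq_zero,
      _root_.inv_eq_zero, not_or]
    refine ⟨fun h => hq2 ?_, hg1⟩
    field_simp at h
    linear_combination -h
  · simp only [map_mul, neg_mul, map_neg, constantCoeff_C, constantCoeff_slope,
      constantCoeff_inv, map_sub, constantCoeff_eigenX hg0, ne_eq, neg_eq_zero, mul_eq_zero,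
      _root_.inv_eq_zero, not_or]
    exact ⟨⟨⟨hq, hi⟩, hg1⟩, sub_ne_zero.mpr hij⟩
  · simp only [map_mul, map_sub, constantCoeff_C, constantCoeff_eigenX hg0, constantCoeff_inv,
      ne_eq, mul_eq_zero, _root_.inv_eq_zero, not_or]
    refine ⟨fun h => hj ?_, sub_ne_zero.mpr hij⟩
    field_simp at h
    linear_combination -h

variable {S : Set K}

theorem star1_Qseries (hg0 : PowerSeries.constantCoeff g = 0) (hg1 : PowerSeries.coeff 1 g ≠ 0)
    (hS0 : ∀ s ∈ S, s ≠ 0) : Star1 q g S n (fun _ => Qseries q g) := by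
  intro i hiS c hc
  have h := congrArg (rename ![lo c, hi c])
    (Qseries_self_mul (q := q) hg0 hg1 (hS0 _ (hiS (lo c))))
  simp only [map_mul, map_sub, rename_C, rename_eigenX, rename_emb1, rename_X,
    Matrix.cons_val_zero, Matrix.cons_val_one] at h
  rw [Qev_eq_rename, XofI_eq_eigenX, XofI_eq_eigenX, ← hc]
  exact h

theorem QQ2_Qseries_mul (hg0 : PowerSeries.constantCoeff g = 0) (hq : q ≠ 0) (c : Fin (n - 1))
    {i : Fin n → K} (hne : i (lo c) ≠ i (hi c)) :
    QQ2 (fun _ => Qseries q g) c i * (DD2 g i c *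
        (rename ![lo c, hi c] (arrowFactor q (i (lo c)) (i (hi c))) *
          rename ![hi c, lo c] (arrowFactor q (i (hi c)) (i (lo c))))) =
      NN2 q g i c := by
  have h := congrArg (rename ![lo c, hi c]) (rename_swap_Qseries_mul_Qseries hg0 hq hne)
  have hswap : ![lo c, hi c] ∘ Equiv.swap 0 1 = ![hi c, lo c] := by
    ext s; fin_cases s <;> simp
  simp only [map_mul, map_sub, rename_C, rename_eigenX, rename_rename, hswap,
    Matrix.cons_val_zero, Matrix.cons_val_one] at h
  rw [QQ2_eq_rename, DD2, NN2, XofI_eq_eigenX, XofI_eq_eigenX]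
  linear_combination h

theorem star2_Qseries (hg0 : PowerSeries.constantCoeff g = 0) (hq : q ≠ 0) (hq2 : q ^ 2 ≠ 1)
    (hS0 : ∀ s ∈ S, s ≠ 0) : Star2 q g S n (fun _ => Qseries q g) := by
  intro i hiS c
  have ha : i (lo c) ≠ 0 := hS0 _ (hiS _)
  have hb : i (hi c) ≠ 0 := hS0 _ (hiS _)
  have key := fun hne => QQ2_Qseries_mul (q := q) (g := g) (i := i) hg0 hq c hne
  simp only [rename_arrowFactor, Matrix.cons_val_zero, Matrix.cons_val_one] at key
  have hsq : ∀ x y : K, y = (q ^ 2)⁻¹ * x ↔ x = q ^ 2 * y := fun x y => by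
    rw [eq_inv_mul_iff_mul_eq₀ (pow_ne_zero 2 hq), eq_comm]
  refine ⟨fun ⟨hne, h1, h2⟩ => ?_, fun ⟨h1, h2⟩ => ?_, fun ⟨h1, h2⟩ => ?_,
    fun ⟨h1, h2⟩ => ?_⟩
  · have h := key hne
    rw [if_neg h1, if_neg (mt (hsq _ _).mpr h2)] at h
    linear_combination h
  · have h1' := (hsq _ _).mp h1
    have h := key (ne_of_eq_sq_mul hq2 hb h1').symm
    rw [if_neg h2, if_pos h1'] at h
    linear_combination h
  · have h := key (ne_of_eq_sq_mul hq2 ha h1)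
    rw [if_pos h1, if_neg (mt (hsq _ _).mpr h2)] at h
    linear_combination h
  · have h := key (ne_of_eq_sq_mul hq2 ha h1)
    rw [if_pos h1, if_pos ((hsq _ _).mp h2)] at h
    linear_combination h

end Qseries

theorem star3_const {S : Set K} (P : K → K → MvPowerSeries (Fin 2) K) :
    Star3 S n (fun _ => P) := by
  intro i _ c c' hcc
  have hlo : lo c' = hi c := Fin.ext hcc
  have h1 : hi c' ≠ lo c := by simp only [hi, lo, ne_eq, Fin.ext_iff, hcc]; omega
  have h2 : hi c' ≠ hi c := by simp [hi, Fin.ext_iff, hcc]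
  have h3 : lo c ≠ lo c' := by simp [hlo, lo_ne_hi]
  have e1 : sw c' (sw c i) (lo c') = i (hi c') := by
    rw [sw_apply_lo]; exact congrArg i (Equiv.swap_apply_of_ne_of_ne h1 h2)
  have e2 : sw c' (sw c i) (hi c') = i (lo c) := by rw [sw_apply_hi, hlo, sw_apply_hi]
  have e3 : sw c (sw c' i) (lo c) = i (hi c') := by rw [sw_apply_lo, ← hlo, sw_apply_lo]
  have e4 : sw c (sw c' i) (hi c) = i (lo c) := by
    rw [sw_apply_hi]; exact congrArg i (Equiv.swap_apply_of_ne_of_ne h3 h1.symm)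
  rw [Qev_eq_rename, Qev_eq_rename, permPS_eq_rename, permPS_eq_rename, rename_rename,
    rename_rename, e1, e2, e3, e4]
  congr 2
  ext s
  fin_cases s
  · simp only [Function.comp_apply, Equiv.symm_swap]
    simp [hlo, Equiv.swap_apply_of_ne_of_ne (lo_ne_hi c) h1.symm]
  · simp only [Function.comp_apply, Equiv.symm_swap]
    simp [← hlo, Equiv.swap_apply_of_ne_of_ne h1 (hlo ▸ h2)]

end

theorem statement10_general {K : Type} [Field K] (q : K) (hq : q ≠ 0) (hq2 : q ^ 2 ≠ 1)
    (S : Set K) (hS0 : ∀ s ∈ S, s ≠ 0)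
    (f g : PowerSeries K) (hg0 : PowerSeries.constantCoeff (R := K) g = 0)
    (hfg : comp1 f g = PowerSeries.X)
    (n : ℕ) :
    ∃ Q : Fin (n - 1) → K → K → MvPowerSeries (Fin 2) K,
      (∀ c : Fin (n - 1), ∀ i ∈ S, ∀ j ∈ S, IsUnit (Q c i j)) ∧
      Star1 q g S n Q ∧ Star2 q g S n Q ∧ Star3 S n Q := by
  have hg1 : PowerSeries.coeff 1 g ≠ 0 := right_ne_zero_of_mul_eq_one (M₀ := K)
    (by rw [← coeff_one_comp1, hfg, PowerSeries.coeff_one_X])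
  exact ⟨fun _ => Qseries q g, fun _ i hi j _ => isUnit_Qseries hg0 hg1 hq hq2 (hS0 i hi) j,
    star1_Qseries hg0 hg1 hS0, star2_Qseries hg0 hq hq2 hS0, star3_const _⟩

/-- Lemma 6.1.  There exists a family of invertible power series
`Q_k(i,j) ∈ K[[z,z']]` satisfying conditions (★1)–(★3). -/
theorem statement10 {K : Type} [Field K] (q : K) (hq : q ≠ 0) (hq2 : q ^ 2 ≠ 1)
    (S : Set K) (hS0 : ∀ s ∈ S, s ≠ 0)
    (hSq : ∀ s ∈ S, q ^ 2 * s ∈ S ∧ (q ^ 2)⁻¹ * s ∈ S) (hSinv : ∀ s ∈ S, s⁻¹ ∈ S)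
    (f g : PowerSeries K) (hf0 : PowerSeries.constantCoeff (R := K) f = 0)
    (hf1 : IsUnit (PowerSeries.coeff (R := K) 1 f)) (hg0 : PowerSeries.constantCoeff (R := K) g = 0)
    (hfg : comp1 f g = PowerSeries.X) (hgf : comp1 g f = PowerSeries.X)
    (n : ℕ) :
    ∃ Q : Fin (n - 1) → K → K → MvPowerSeries (Fin 2) K,
      (∀ c : Fin (n - 1), ∀ i ∈ S, ∀ j ∈ S, IsUnit (Q c i j)) ∧
      Star1 q g S n Q ∧ Star2 q g S n Q ∧ Star3 S n Q :=
  statement10_general q hq hq2 S hS0 f g hg0 hfg n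

end PdAW
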